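/- arXiv:2010.04937 — 2 statements merged into one kernel-verified Lean document; each statement's English description precedes it below -/
import Mathlib

section
/- Let f be L-smooth and γ-quasar-convex with respect to a global minimizer x*, let R ≥ ‖x₀ − x*‖, and run SGD for T iterations with constant step size α satisfying 0 < α ≤ 1/(2L). Then the expected suboptimality of the iterates satisfies ∑_{t=1}^{T} E[f(x_t) − f(x*)] ≤ R²/(2γα) + σ²αT/(2γ(1 − αLγ)) + (1/γ − 1)Lα²σ²T + (1/γ − 1)LR². -/
open MeasureTheory Finset
open scoped RealInnerProductSpace

/-!
Write `r t = E‖x t - x*‖²`, `D t = E f(x t) - f x*` and `G t = E‖∇f(x t)‖²`. Since `g t` is an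
unbiased estimate of `∇f(x t)` given the past, quasar-convexity yields
`r (t+1) ≤ r t - 2αγ D t + α²(σ² + G t)` and the descent lemma for `L`-smooth `f` yields
`D (t+1) ≤ D t - α G t + Lα²/2 (σ² + G t)`. When `αL ≤ 1/2` the `G`-terms cancel in the potential
`r t + 4α(1-γ) D t`, which therefore decreases by `2αγ D (t+1)` up to `α²σ²(1 + (2-γ)αL)` per
step. Telescoping, with `D 0 ≤ L R²/2` and `1 + αLγ ≤ 1/(1 - αLγ)`, gives the bound.
-/

section Smooth

variable {E : Type*} [NormedAddCommGroup E] [InnerProductSpace ℝ E] [CompleteSpace E]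
  {f : E → ℝ} {f' : E → E} {L : ℝ}

theorem IsLocalMin.hasGradientAt_eq_zero {x : E} (hmin : IsLocalMin f x)
    (hf : HasGradientAt f (f' x) x) : f' x = 0 :=
  (InnerProductSpace.toDual ℝ E).map_eq_zero_iff.mp (hmin.hasFDerivAt_eq_zero hf.hasFDerivAt)

theorem HasGradientAt.hasDerivAt_add_smul {y d : E} {t : ℝ}
    (hf : HasGradientAt f (f' (y + t • d)) (y + t • d)) :
    HasDerivAt (fun s : ℝ => f (y + s • d)) ⟪f' (y + t • d), d⟫ t := by
  have hline : HasDerivAt (fun s : ℝ => y + s • d) d t := by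
    simpa using ((hasDerivAt_id t).smul_const d).const_add y
  simpa [InnerProductSpace.toDual_apply_apply, Function.comp_def] using
    hf.hasFDerivAt.comp_hasDerivAt t hline

theorem le_add_inner_add_of_lipschitz_gradient (hgrad : ∀ y, HasGradientAt f (f' y) y)
    (hsmooth : ∀ y z, ‖f' y - f' z‖ ≤ L * ‖y - z‖) (y z : E) :
    f z ≤ f y + ⟪f' y, z - y⟫ + L / 2 * ‖z - y‖ ^ 2 := by
  set d := z - y
  set ψ : ℝ → ℝ := fun s => f (y + s • d) - s * ⟪f' y, d⟫ - L / 2 * s ^ 2 * ‖d‖ ^ 2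
  have hψ : ∀ s : ℝ, HasDerivAt ψ (⟪f' (y + s • d) - f' y, d⟫ - L * s * ‖d‖ ^ 2) s := by
    intro s
    have := (((hgrad (y + s • d)).hasDerivAt_add_smul).sub (hasDerivAt_mul_const ⟪f' y, d⟫)).sub
      (((hasDerivAt_pow 2 s).const_mul (L / 2)).mul_const (‖d‖ ^ 2))
    exact this.congr_deriv (by rw [inner_sub_left]; ring)
  have hψ' : ∀ s ∈ interior (Set.Icc (0 : ℝ) 1), deriv ψ s ≤ 0 := by
    intro s hs
    rw [interior_Icc] at hs
    rw [(hψ s).deriv, sub_nonpos]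
    calc ⟪f' (y + s • d) - f' y, d⟫ ≤ ‖f' (y + s • d) - f' y‖ * ‖d‖ := real_inner_le_norm _ _
      _ ≤ L * ‖s • d‖ * ‖d‖ := by
        gcongr
        simpa using hsmooth (y + s • d) y
      _ = L * s * ‖d‖ ^ 2 := by rw [norm_smul, Real.norm_of_nonneg hs.1.le]; ring
  have hanti : ψ 1 ≤ ψ 0 :=
    antitoneOn_of_deriv_nonpos (convex_Icc 0 1)
      (fun s _ => (hψ s).continuousAt.continuousWithinAt)
      (fun s _ => (hψ s).differentiableAt.differentiableWithinAt) hψ'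
      (by simp) (by simp) zero_le_one
  simp only [ψ, d, one_smul, zero_smul, add_zero, add_sub_cancel] at hanti
  linarith

theorem sub_le_of_lipschitz_gradient_of_eq_zero (hgrad : ∀ y, HasGradientAt f (f' y) y)
    (hsmooth : ∀ y z, ‖f' y - f' z‖ ≤ L * ‖y - z‖) {y : E} (hy : f' y = 0) (z : E) :
    f z - f y ≤ L / 2 * ‖z - y‖ ^ 2 := by
  have := le_add_inner_add_of_lipschitz_gradient hgrad hsmooth y z
  rw [hy, inner_zero_left] at this
  linarith

end Smooth

theorem mul_sub_le_inner_of_quasarConvex {E : Type*} [NormedAddCommGroup E]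
    [InnerProductSpace ℝ E] {f : E → ℝ} {f' : E → E} {xstar y : E} {γ : ℝ} (hγ0 : 0 < γ)
    (hqc : f xstar ≥ f y + (1/γ) * ⟪f' y, xstar - y⟫) :
    γ * (f y - f xstar) ≤ ⟪y - xstar, f' y⟫ := by
  rw [ge_iff_le, ← le_sub_iff_add_le', one_div, inv_mul_le_iff₀ hγ0, ← neg_sub y xstar,
    inner_neg_right, real_inner_comm] at hqc
  linarith

section Expectation

variable {Ω E : Type*} {m mΩ : MeasurableSpace Ω} {P : Measure Ω} [NormedAddCommGroup E]

theorem MeasureTheory.MemLp.integrable_norm_sq {v : Ω → E} (hv : MemLp v 2 P) :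
    Integrable (fun ω => ‖v ω‖ ^ 2) P :=
  (memLp_two_iff_integrable_sq_norm hv.1).1 hv

variable [InnerProductSpace ℝ E]

theorem MeasureTheory.MemLp.integrable_inner {v w : Ω → E} (hv : MemLp v 2 P)
    (hw : MemLp w 2 P) : Integrable (fun ω => ⟪v ω, w ω⟫) P :=
  memLp_one_iff_integrable.1 ((innerSL ℝ).memLp_of_bilin 1 hv hw)

variable [CompleteSpace E] [IsFiniteMeasure P]

theorem integral_inner_eq_of_condExp_eq (hm : m ≤ mΩ) {v w u : Ω → E}
    (hv : StronglyMeasurable[m] v) (hv2 : MemLp v 2 P) (hw2 : MemLp w 2 P)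
    (hcond : P[w|m] =ᵐ[P] u) :
    ∫ ω, ⟪v ω, w ω⟫ ∂P = ∫ ω, ⟪v ω, u ω⟫ ∂P := by
  rw [← integral_condExp hm]
  refine integral_congr_ae ((condExp_bilin_of_stronglyMeasurable_left (innerSL ℝ) hv
    (hv2.integrable_inner hw2) (hw2.integrable one_le_two)).trans ?_)
  filter_upwards [hcond] with ω hω
  rw [hω, innerSL_apply_apply]

theorem integral_norm_sq_eq_of_condExp_eq (hm : m ≤ mΩ) {g h : Ω → E}
    (hh : StronglyMeasurable[m] h) (hg2 : MemLp g 2 P) (hh2 : MemLp h 2 P)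
    (hcond : P[g|m] =ᵐ[P] h) :
    ∫ ω, ‖g ω‖ ^ 2 ∂P = ∫ ω, ‖g ω - h ω‖ ^ 2 ∂P + ∫ ω, ‖h ω‖ ^ 2 ∂P := by
  have hinner : ∫ ω, ⟪h ω, g ω⟫ ∂P = ∫ ω, ‖h ω‖ ^ 2 ∂P := by
    simp_rw [integral_inner_eq_of_condExp_eq hm hh hh2 hg2 hcond, real_inner_self_eq_norm_sq]
  have hexpand : (fun ω => ‖g ω - h ω‖ ^ 2)
      = fun ω => ‖g ω‖ ^ 2 - 2 * ⟪h ω, g ω⟫ + ‖h ω‖ ^ 2 := by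
    ext ω
    rw [norm_sub_sq_real, real_inner_comm]
  have hcross := (hh2.integrable_inner hg2).const_mul 2
  rw [hexpand, integral_add (f := fun ω => ‖g ω‖ ^ 2 - 2 * ⟪h ω, g ω⟫)
    (hg2.integrable_norm_sq.sub hcross) hh2.integrable_norm_sq,
    integral_sub hg2.integrable_norm_sq hcross, integral_const_mul, hinner]
  ring

theorem integral_norm_sq_le_of_condExp_eq [IsProbabilityMeasure P] (hm : m ≤ mΩ) {g h : Ω → E}
    {σ : ℝ} (hh : StronglyMeasurable[m] h) (hg2 : MemLp g 2 P) (hh2 : MemLp h 2 P)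
    (hcond : P[g|m] =ᵐ[P] h) (hvar : ∀ᵐ ω ∂P, P[fun ω => ‖g ω - h ω‖ ^ 2|m] ω ≤ σ ^ 2) :
    ∫ ω, ‖g ω‖ ^ 2 ∂P ≤ σ ^ 2 + ∫ ω, ‖h ω‖ ^ 2 ∂P := by
  have hnoise : ∫ ω, ‖g ω - h ω‖ ^ 2 ∂P ≤ σ ^ 2 := by
    rw [← integral_condExp hm]
    simpa using integral_mono_ae integrable_condExp (integrable_const (σ ^ 2)) hvar
  rw [integral_norm_sq_eq_of_condExp_eq hm hh hg2 hh2 hcond]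
  linarith

end Expectation

section SGDStep

variable {Ω E : Type*} {m mΩ : MeasurableSpace Ω} {P : Measure Ω} [IsProbabilityMeasure P]
  [NormedAddCommGroup E] [InnerProductSpace ℝ E] [CompleteSpace E]
  {f : E → ℝ} {f' : E → E} {x g : Ω → E} {xstar : E} {L γ σ α : ℝ}

theorem integral_norm_sub_sq_sgd_step_le (hm : m ≤ mΩ) (hγ0 : 0 < γ) (hα : 0 ≤ α)
    (hqc : ∀ y, f xstar ≥ f y + (1/γ) * ⟪f' y, xstar - y⟫)
    (hx : StronglyMeasurable[m] x) (hv2 : MemLp (fun ω => x ω - xstar) 2 P) (hg2 : MemLp g 2 P)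
    (hfx : StronglyMeasurable[m] fun ω => f' (x ω)) (hfx2 : MemLp (fun ω => f' (x ω)) 2 P)
    (hfint : Integrable (fun ω => f (x ω)) P) (hcond : P[g|m] =ᵐ[P] fun ω => f' (x ω))
    (hvar : ∀ᵐ ω ∂P, P[fun ω => ‖g ω - f' (x ω)‖ ^ 2|m] ω ≤ σ ^ 2) :
    ∫ ω, ‖x ω - α • g ω - xstar‖ ^ 2 ∂P
      ≤ ∫ ω, ‖x ω - xstar‖ ^ 2 ∂P - 2 * α * γ * (∫ ω, f (x ω) ∂P - f xstar)
        + α ^ 2 * (σ ^ 2 + ∫ ω, ‖f' (x ω)‖ ^ 2 ∂P) := by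
  have hcross := (hv2.integrable_inner hg2).const_mul (2 * α)
  have hexpand : (fun ω => ‖x ω - α • g ω - xstar‖ ^ 2) = fun ω =>
      ‖x ω - xstar‖ ^ 2 - 2 * α * ⟪x ω - xstar, g ω⟫ + α ^ 2 * ‖g ω‖ ^ 2 := by
    ext ω
    rw [sub_right_comm, norm_sub_sq_real, real_inner_smul_right, norm_smul, mul_pow,
      Real.norm_eq_abs, sq_abs]
    ring
  have hdrift : γ * (∫ ω, f (x ω) ∂P - f xstar) ≤ ∫ ω, ⟪x ω - xstar, g ω⟫ ∂P := by
    rw [integral_inner_eq_of_condExp_eq (v := fun ω => x ω - xstar) hm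
      (hx.sub stronglyMeasurable_const) hv2 hg2 hcond]
    have hmean : ∫ ω, γ * (f (x ω) - f xstar) ∂P = γ * (∫ ω, f (x ω) ∂P - f xstar) := by
      rw [integral_const_mul, integral_sub hfint (integrable_const _), integral_const]
      simp
    rw [← hmean]
    refine integral_mono ((hfint.sub (integrable_const _)).const_mul γ)
      (hv2.integrable_inner hfx2) fun ω => ?_
    exact mul_sub_le_inner_of_quasarConvex hγ0 (hqc (x ω))
  have hsecond := integral_norm_sq_le_of_condExp_eq hm hfx hg2 hfx2 hcond hvar
  rw [hexpand, integral_add (f := fun ω => ‖x ω - xstar‖ ^ 2 - 2 * α * ⟪x ω - xstar, g ω⟫)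
    (hv2.integrable_norm_sq.sub hcross) (hg2.integrable_norm_sq.const_mul _),
    integral_sub hv2.integrable_norm_sq hcross, integral_const_mul, integral_const_mul]
  nlinarith [mul_le_mul_of_nonneg_left hsecond (sq_nonneg α),
    mul_le_mul_of_nonneg_left hdrift (by positivity : 0 ≤ 2 * α)]

theorem integral_sgd_step_le (hm : m ≤ mΩ) (hL : 0 ≤ L)
    (hgrad : ∀ y, HasGradientAt f (f' y) y) (hsmooth : ∀ y z, ‖f' y - f' z‖ ≤ L * ‖y - z‖)
    (hg2 : MemLp g 2 P) (hfx : StronglyMeasurable[m] fun ω => f' (x ω))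
    (hfx2 : MemLp (fun ω => f' (x ω)) 2 P) (hfint : Integrable (fun ω => f (x ω)) P)
    (hfint' : Integrable (fun ω => f (x ω - α • g ω)) P)
    (hcond : P[g|m] =ᵐ[P] fun ω => f' (x ω))
    (hvar : ∀ᵐ ω ∂P, P[fun ω => ‖g ω - f' (x ω)‖ ^ 2|m] ω ≤ σ ^ 2) :
    ∫ ω, f (x ω - α • g ω) ∂P
      ≤ ∫ ω, f (x ω) ∂P - α * ∫ ω, ‖f' (x ω)‖ ^ 2 ∂P
        + L * α ^ 2 / 2 * (σ ^ 2 + ∫ ω, ‖f' (x ω)‖ ^ 2 ∂P) := by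
  have hcross := (hfx2.integrable_inner hg2).const_mul α
  have hdescent : ∀ ω, f (x ω - α • g ω)
      ≤ f (x ω) - α * ⟪f' (x ω), g ω⟫ + L * α ^ 2 / 2 * ‖g ω‖ ^ 2 := by
    intro ω
    have := le_add_inner_add_of_lipschitz_gradient hgrad hsmooth (x ω) (x ω - α • g ω)
    rw [sub_sub_cancel_left, inner_neg_right, real_inner_smul_right, norm_neg, norm_smul,
      mul_pow, Real.norm_eq_abs, sq_abs] at this
    linarith
  have hgradient : ∫ ω, ⟪f' (x ω), g ω⟫ ∂P = ∫ ω, ‖f' (x ω)‖ ^ 2 ∂P := by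
    simp_rw [integral_inner_eq_of_condExp_eq hm hfx hfx2 hg2 hcond, real_inner_self_eq_norm_sq]
  have hsecond := integral_norm_sq_le_of_condExp_eq hm hfx hg2 hfx2 hcond hvar
  have hbound : Integrable
      (fun ω => f (x ω) - α * ⟪f' (x ω), g ω⟫ + L * α ^ 2 / 2 * ‖g ω‖ ^ 2) P :=
    (hfint.sub hcross).add (hg2.integrable_norm_sq.const_mul _)
  calc ∫ ω, f (x ω - α • g ω) ∂P
      ≤ ∫ ω, f (x ω) - α * ⟪f' (x ω), g ω⟫ + L * α ^ 2 / 2 * ‖g ω‖ ^ 2 ∂P :=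
        integral_mono hfint' hbound hdescent
    _ = ∫ ω, f (x ω) ∂P - α * ∫ ω, ‖f' (x ω)‖ ^ 2 ∂P
          + L * α ^ 2 / 2 * ∫ ω, ‖g ω‖ ^ 2 ∂P := by
        rw [integral_add (f := fun ω => f (x ω) - α * ⟪f' (x ω), g ω⟫) (hfint.sub hcross)
          (hg2.integrable_norm_sq.const_mul _), integral_sub hfint hcross, integral_const_mul,
          integral_const_mul, hgradient]
    _ ≤ _ := by gcongr

end SGDStep

theorem stronglyMeasurable_sgd_iterate {Ω E : Type*} [NormedAddCommGroup E] [NormedSpace ℝ E]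
    [MeasurableSpace E] [BorelSpace E] [SecondCountableTopology E] {x g : ℕ → Ω → E} {x₀ : E}
    {α : ℝ} (hx0 : x 0 = fun _ => x₀) (hstep : ∀ t, x (t + 1) = fun ω => x t ω - α • g t ω)
    (t : ℕ) :
    StronglyMeasurable[⨆ i ∈ range t, MeasurableSpace.comap (g i) inferInstance] (x t) := by
  induction t with
  | zero => rw [hx0]; exact stronglyMeasurable_const
  | succ t ih =>
    have hmono : (⨆ i ∈ range t, MeasurableSpace.comap (g i) inferInstance)
        ≤ ⨆ i ∈ range (t + 1), MeasurableSpace.comap (g i) inferInstance :=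
      biSup_mono fun i hi => range_subset_range.2 (Nat.le_succ t) hi
    have hg : Measurable[⨆ i ∈ range (t + 1), MeasurableSpace.comap (g i) inferInstance] (g t) :=
      measurable_iff_comap_le.2 (le_biSup (fun i => MeasurableSpace.comap (g i) inferInstance)
        (self_mem_range_succ t))
    rw [hstep]
    exact (ih.mono hmono).sub (hg.stronglyMeasurable.const_smul α)

theorem add_sum_Icc_le_of_succ_le {W a : ℕ → ℝ} {K : ℝ}
    (h : ∀ t, W (t + 1) + a (t + 1) ≤ W t + K) (N : ℕ) :
    W N + ∑ t ∈ Icc 1 N, a t ≤ W 0 + N * K := by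
  induction N with
  | zero => simp
  | succ N ih =>
    rw [sum_Icc_succ_top (by omega)]
    push_cast
    linarith [h N]

theorem sum_Icc_le_of_sgd_recursion {L γ σ R α : ℝ} {T : ℕ} {r D G : ℕ → ℝ}
    (hγ0 : 0 < γ) (hγ1 : γ ≤ 1) (hα0 : 0 < α) (hαL : α * L ≤ 1 / 2)
    (hr : ∀ t, 0 ≤ r t) (hD : ∀ t, 0 ≤ D t) (hG : ∀ t, 0 ≤ G t)
    (hr0 : r 0 ≤ R ^ 2) (hD0 : D 0 ≤ L / 2 * R ^ 2)
    (hdist : ∀ t, r (t + 1) ≤ r t - 2 * α * γ * D t + α ^ 2 * (σ ^ 2 + G t))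
    (hvalue : ∀ t, D (t + 1) ≤ D t - α * G t + L * α ^ 2 / 2 * (σ ^ 2 + G t)) :
    ∑ t ∈ Icc 1 T, D t
      ≤ R^2/(2*γ*α) + σ^2*α*(T : ℝ)/(2*γ*(1-α*L*γ))
        + (1/γ - 1)*L*α^2*σ^2*(T : ℝ) + (1/γ - 1)*L*R^2 := by
  set K := α ^ 2 * σ ^ 2 * (1 + (2 - γ) * α * L)
  -- the `G`-terms cancel because `(2 - γ) * (2 - α * L) ≥ 3 / 2 > 1`
  have hstep : ∀ t, (r (t + 1) + 4 * α * (1 - γ) * D (t + 1)) + 2 * α * γ * D (t + 1)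
      ≤ (r t + 4 * α * (1 - γ) * D t) + K := by
    intro t
    have hcoef : α ^ 2 * (1 - (2 - γ) * (2 - α * L)) * G t ≤ 0 :=
      mul_nonpos_of_nonpos_of_nonneg
        (mul_nonpos_of_nonneg_of_nonpos (sq_nonneg α) (by nlinarith)) (hG t)
    nlinarith [mul_le_mul_of_nonneg_left (hvalue t) (by nlinarith : 0 ≤ 2 * α * (2 - γ)),
      hdist t]
  have hsum := add_sum_Icc_le_of_succ_le (W := fun t => r t + 4 * α * (1 - γ) * D t)
    (a := fun t => 2 * α * γ * D t) hstep T
  rw [← mul_sum] at hsum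
  have hu : α * L * γ < 1 := by nlinarith
  have hinv : 1 + α * L * γ ≤ 1 / (1 - α * L * γ) := by
    rw [le_div_iff₀ (by linarith)]; nlinarith [sq_nonneg (α * L * γ)]
  have hbound : 2 * α * γ * ∑ t ∈ Icc 1 T, D t
      ≤ R ^ 2 + 2 * α * (1 - γ) * L * R ^ 2 + T * K := by
    have hc : 0 ≤ 4 * α * (1 - γ) := by nlinarith
    nlinarith [hr T, mul_nonneg hc (hD T), mul_le_mul_of_nonneg_left hD0 hc]
  have htarget : R^2/(2*γ*α) + σ^2*α*(T : ℝ)/(2*γ*(1-α*L*γ))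
        + (1/γ - 1)*L*α^2*σ^2*(T : ℝ) + (1/γ - 1)*L*R^2
      = (R ^ 2 + 2 * α * (1 - γ) * L * R ^ 2 + T * K) / (2 * α * γ)
        + σ ^ 2 * α * T / (2 * γ) * (1 / (1 - α * L * γ) - (1 + α * L * γ)) := by
    field_simp
    ring
  rw [htarget]
  refine le_add_of_le_of_nonneg ?_ (mul_nonneg (by positivity) (sub_nonneg.mpr hinv))
  rw [le_div_iff₀ (by positivity)]
  linarith

theorem sgd_quasar_sum_suboptimality_general
    {Ω : Type*} [MeasurableSpace Ω] (P : Measure Ω) [IsProbabilityMeasure P]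
    {n : ℕ} (f : EuclideanSpace ℝ (Fin n) → ℝ)
    (f' : EuclideanSpace ℝ (Fin n) → EuclideanSpace ℝ (Fin n))
    (xstar x₀ : EuclideanSpace ℝ (Fin n))
    (L γ σ R α : ℝ) (T : ℕ)
    (x g : ℕ → Ω → EuclideanSpace ℝ (Fin n))
    (hgrad : ∀ y, HasGradientAt f (f' y) y)
    (hmin : ∀ y, f xstar ≤ f y)
    (hγ0 : 0 < γ) (hγ1 : γ ≤ 1)
    (hqc : ∀ y, f xstar ≥ f y + (1/γ) * ⟪f' y, xstar - y⟫)
    (hsmooth : ∀ y z, ‖f' y - f' z‖ ≤ L * ‖y - z‖)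
    (hR : ‖x₀ - xstar‖ ≤ R)
    (hα0 : 0 < α) (hα : α ≤ 1/(2*L))
    (hx0 : x 0 = fun _ => x₀)
    (hstep : ∀ t, x (t+1) = fun ω => x t ω - α • g t ω)
    (hgmeas : ∀ t, Measurable (g t))
    (hgsqint : ∀ t, Integrable (fun ω => ‖g t ω‖^2) P)
    (hunbiased : ∀ t,
      MeasureTheory.condExp
          (⨆ i ∈ Finset.range t, MeasurableSpace.comap (g i) inferInstance) P (g t)
        =ᵐ[P] fun ω => f' (x t ω))
    (hvar : ∀ t, ∀ᵐ ω ∂P,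
      MeasureTheory.condExp
          (⨆ i ∈ Finset.range t, MeasurableSpace.comap (g i) inferInstance) P
          (fun ω' => ‖g t ω' - f' (x t ω')‖^2) ω ≤ σ^2)
    (hfint : ∀ t, Integrable (fun ω => f (x t ω)) P)
    (hsqint : ∀ t, Integrable (fun ω => ‖x t ω - xstar‖^2) P)
:    ∑ t ∈ Finset.Icc 1 T, (∫ ω, f (x t ω) ∂P - f xstar)
      ≤ R^2/(2*γ*α) + σ^2*α*(T : ℝ)/(2*γ*(1-α*L*γ))
        + (1/γ - 1)*L*α^2*σ^2*(T : ℝ) + (1/γ - 1)*L*R^2 := by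
  have hL : 0 < L := by linarith [one_div_pos.1 (hα0.trans_le hα)]
  have hαL : α * L ≤ 1 / 2 := by
    rw [le_div_iff₀ (by positivity)] at hα
    linarith
  have hm : ∀ t, (⨆ i ∈ range t, MeasurableSpace.comap (g i) inferInstance) ≤ ‹_› :=
    fun t => iSup₂_le fun i _ => (hgmeas i).comap_le
  have hx := stronglyMeasurable_sgd_iterate hx0 hstep
  have hf' : LipschitzWith L.toNNReal f' :=
    .of_dist_le' fun y z => by simpa [dist_eq_norm] using hsmooth y z
  have hfx t := hf'.continuous.comp_stronglyMeasurable (hx t)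
  have hstar : f' xstar = 0 :=
    IsLocalMin.hasGradientAt_eq_zero (.of_forall hmin) (hgrad xstar)
  have hdist2 t : MemLp (fun ω => x t ω - xstar) 2 P :=
    (memLp_two_iff_integrable_sq_norm (((hx t).mono (hm t)).sub
      stronglyMeasurable_const).aestronglyMeasurable).2 (hsqint t)
  have hfx2 t : MemLp (fun ω => f' (x t ω)) 2 P :=
    (hdist2 t).of_le_mul ((hfx t).mono (hm t)).aestronglyMeasurable
      (.of_forall fun ω => by simpa [hstar] using hsmooth (x t ω) xstar)
  have hg2 t : MemLp (g t) 2 P :=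
    (memLp_two_iff_integrable_sq_norm (hgmeas t).aestronglyMeasurable).2 (hgsqint t)
  refine sum_Icc_le_of_sgd_recursion (r := fun t => ∫ ω, ‖x t ω - xstar‖ ^ 2 ∂P)
    (G := fun t => ∫ ω, ‖f' (x t ω)‖ ^ 2 ∂P) hγ0 hγ1 hα0 hαL
    (fun t => integral_nonneg fun ω => by positivity) (fun t => ?_)
    (fun t => integral_nonneg fun ω => by positivity) ?_ ?_ (fun t => ?_) (fun t => ?_)
  · rw [sub_nonneg]
    simpa using integral_mono (integrable_const (f xstar)) (hfint t) fun ω => hmin (x t ω)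
  · simpa [hx0] using pow_le_pow_left₀ (norm_nonneg _) hR 2
  · simpa [hx0] using (sub_le_of_lipschitz_gradient_of_eq_zero hgrad hsmooth hstar x₀).trans
      (by gcongr : L / 2 * ‖x₀ - xstar‖ ^ 2 ≤ L / 2 * R ^ 2)
  · simpa only [hstep] using integral_norm_sub_sq_sgd_step_le (hm t) hγ0 hα0.le hqc (hx t)
      (hdist2 t) (hg2 t) (hfx t) (hfx2 t) (hfint t) (hunbiased t) (hvar t)
  · have := integral_sgd_step_le (hm t) hL.le hgrad hsmooth (hg2 t) (hfx t) (hfx2 t) (hfint t)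
      (by simpa only [hstep] using hfint (t + 1)) (hunbiased t) (hvar t)
    simp only [hstep]
    linarith

theorem sgd_quasar_sum_suboptimality
    {Ω : Type*} [MeasurableSpace Ω] (P : Measure Ω) [IsProbabilityMeasure P]
    {n : ℕ} (f : EuclideanSpace ℝ (Fin n) → ℝ)
    (f' : EuclideanSpace ℝ (Fin n) → EuclideanSpace ℝ (Fin n))
    (xstar x₀ : EuclideanSpace ℝ (Fin n))
    (L γ σ R α : ℝ) (T : ℕ)
    (x g : ℕ → Ω → EuclideanSpace ℝ (Fin n))
    (hgrad : ∀ y, HasGradientAt f (f' y) y)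
    (hmin : ∀ y, f xstar ≤ f y)
    (hγ0 : 0 < γ) (hγ1 : γ ≤ 1)
    (hqc : ∀ y, f xstar ≥ f y + (1/γ) * ⟪f' y, xstar - y⟫)
    (hsmooth : ∀ y z, ‖f' y - f' z‖ ≤ L * ‖y - z‖)
    (hR : ‖x₀ - xstar‖ ≤ R)
    (hα0 : 0 < α) (hα : α ≤ 1/(2*L))
    (hx0 : x 0 = fun _ => x₀)
    (hstep : ∀ t, x (t+1) = fun ω => x t ω - α • g t ω)
    (hgmeas : ∀ t, Measurable (g t))
    (hgint : ∀ t, Integrable (g t) P)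
    (hgsqint : ∀ t, Integrable (fun ω => ‖g t ω‖^2) P)
    (hunbiased : ∀ t,
      MeasureTheory.condExp
          (⨆ i ∈ Finset.range t, MeasurableSpace.comap (g i) inferInstance) P (g t)
        =ᵐ[P] fun ω => f' (x t ω))
    (hvar : ∀ t, ∀ᵐ ω ∂P,
      MeasureTheory.condExp
          (⨆ i ∈ Finset.range t, MeasurableSpace.comap (g i) inferInstance) P
          (fun ω' => ‖g t ω' - f' (x t ω')‖^2) ω ≤ σ^2)
    (hfint : ∀ t, Integrable (fun ω => f (x t ω)) P)
    (hsqint : ∀ t, Integrable (fun ω => ‖x t ω - xstar‖^2) P)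
:    ∑ t ∈ Finset.Icc 1 T, (∫ ω, f (x t ω) ∂P - f xstar)
      ≤ R^2/(2*γ*α) + σ^2*α*(T : ℝ)/(2*γ*(1-α*L*γ))
        + (1/γ - 1)*L*α^2*σ^2*(T : ℝ) + (1/γ - 1)*L*R^2 :=
  sgd_quasar_sum_suboptimality_general P f f' xstar x₀ L γ σ R α T x g hgrad hmin hγ0 hγ1 hqc
    hsmooth hR hα0 hα hx0 hstep hgmeas hgsqint hunbiased hvar hfint hsqint
end

section
/- Let f be L-smooth and γ-quasar-convex with respect to a global minimizer x*, let R ≥ ‖x₀ − x*‖, and run SGD with constant step size 0 < α ≤ 1/(2L). Writing Δ_t = E[f(x_t) − f(x*)], for every t ≥ 0 the one-step inequality (2/γ − 1)Δ_{t+1} − (2/γ − 2)Δ_t ≤ (1/(2γα)) (E‖x_t − x*‖² − E‖x_{t+1} − x*‖²) + σ²α/(2γ(1 − αLγ)) + (1/γ − 1)Lα²σ² holds. -/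
open MeasureTheory Finset
open scoped RealInnerProductSpace

/-!
Conditionally on `g₀, …, g_{t-1}` the iterate `x_t` is fixed and `g_t` is unbiased, so in
expectation `⟪x_t - x*, g_t⟫` and `⟪∇f(x_t), g_t⟫` may be replaced by `⟪x_t - x*, ∇f(x_t)⟫`
and `‖∇f(x_t)‖²`, and `E‖g_t‖² ≤ E‖∇f(x_t)‖² + σ²`. Combining the expansion of
`‖x_t - αg_t - x*‖²`, the descent lemma `f(x - αg) ≤ f(x) - α⟪∇f(x), g⟫ + Lα²‖g‖²/2` and
quasar-convexity `γ(f(x) - f(x*)) ≤ ⟪x - x*, ∇f(x)⟫` leaves an inequality between real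
numbers, in which `αL ≤ 1/2` makes the coefficient of `E‖∇f(x_t)‖²` nonpositive.
-/

theorem continuous_of_norm_sub_le {E F : Type*} [NormedAddCommGroup E] [NormedAddCommGroup F]
    {φ : E → F} {L : ℝ} (hφ : ∀ y z, ‖φ y - φ z‖ ≤ L * ‖y - z‖) : Continuous φ :=
  (LipschitzWith.of_dist_le' (K := L) (by simpa [dist_eq_norm] using hφ)).continuous

theorem le_add_inner_add_sq_of_lipschitz_gradient {E : Type*} [NormedAddCommGroup E]
    [InnerProductSpace ℝ E] [CompleteSpace E] {f : E → ℝ} {f' : E → E} {L : ℝ}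
    (hgrad : ∀ y, HasGradientAt f (f' y) y) (hsmooth : ∀ y z, ‖f' y - f' z‖ ≤ L * ‖y - z‖)
    (y z : E) : f z ≤ f y + ⟪f' y, z - y⟫ + L / 2 * ‖z - y‖ ^ 2 := by
  set d := z - y
  let φ : ℝ → ℝ := fun s => f (y + s • d) - s * ⟪f' y, d⟫ - L / 2 * (s ^ 2 * ‖d‖ ^ 2)
  have hφ : ∀ s, HasDerivAt φ (⟪f' (y + s • d), d⟫ - ⟪f' y, d⟫ - L * s * ‖d‖ ^ 2) s := by
    intro s
    have hline : HasDerivAt (fun s : ℝ => y + s • d) d s := by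
      simpa using ((hasDerivAt_id s).smul_const d).const_add y
    have := (((hgrad _).hasFDerivAt.comp_hasDerivAt s hline).sub
      ((hasDerivAt_id s).mul_const ⟪f' y, d⟫)).sub
      (((hasDerivAt_pow 2 s).mul_const (‖d‖ ^ 2)).const_mul (L / 2))
    exact this.congr_deriv (by simp; ring)
  have hanti : AntitoneOn φ (Set.Icc 0 1) := by
    refine antitoneOn_of_hasDerivWithinAt_nonpos (convex_Icc 0 1)
      (fun s _ => (hφ s).continuousAt.continuousWithinAt)
      (fun s _ => (hφ s).hasDerivWithinAt) fun s hs => ?_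
    rw [interior_Icc] at hs
    have hgap : ‖f' (y + s • d) - f' y‖ ≤ L * s * ‖d‖ := by
      simpa [norm_smul, abs_of_pos hs.1, mul_assoc] using hsmooth (y + s • d) y
    have := real_inner_le_norm (f' (y + s • d) - f' y) d
    rw [inner_sub_left] at this
    nlinarith [norm_nonneg d]
  have h1 : φ 1 = f z - ⟪f' y, d⟫ - L / 2 * ‖d‖ ^ 2 := by simp [φ, d]
  have h0 : φ 0 = f y := by simp [φ]
  linarith [hanti (by simp) (by simp) zero_le_one]

theorem mul_sub_le_inner_of_quasar {E : Type*} [NormedAddCommGroup E] [InnerProductSpace ℝ E]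
    {f : E → ℝ} {f' : E → E} {xstar : E} {γ : ℝ} (hγ0 : 0 < γ)
    (hqc : ∀ y, f xstar ≥ f y + (1 / γ) * ⟪f' y, xstar - y⟫) (y : E) :
    γ * (f y - f xstar) ≤ ⟪y - xstar, f' y⟫ := by
  have h := hqc y
  rw [← neg_sub, inner_neg_right, real_inner_comm] at h
  have hγγ : γ * (1 / γ) = 1 := by field_simp
  linear_combination γ * h + ⟪y - xstar, f' y⟫ * hγγ

theorem sgd_one_step_of_moment_bounds {γ α L v Δ Δ' r r' a b s : ℝ} (hγ0 : 0 < γ)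
    (hγ1 : γ ≤ 1) (hα0 : 0 < α) (hα : α ≤ 1 / (2 * L)) (hv : 0 ≤ v) (hb : 0 ≤ b)
    (hdescent : Δ' ≤ Δ - α * b + L * α ^ 2 / 2 * s)
    (hdist : r' = r - 2 * α * a + α ^ 2 * s)
    (hquasar : γ * Δ ≤ a)
    (hvar : s ≤ b + v) :
    (2 / γ - 1) * Δ' - (2 / γ - 2) * Δ
      ≤ 1 / (2 * γ * α) * (r - r') + v * α / (2 * γ * (1 - α * L * γ))
        + (1 / γ - 1) * L * α ^ 2 * v := by
  have hL : 0 < L := by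
    by_contra! hL
    linarith [one_div_nonpos.2 (by linarith : 2 * L ≤ 0)]
  have hαL : α * L ≤ 1 / 2 := by
    rw [le_div_iff₀ (by positivity)] at hα
    linarith
  set κ := 1 / γ with hκ
  have hγκ : γ * κ = 1 := by rw [hκ]; field_simp
  have hκ1 : 1 ≤ κ := by rw [hκ, le_div_iff₀ hγ0]; linarith
  have h2κ : 0 ≤ 2 * κ - 1 := by linarith
  have hΔ : Δ ≤ κ * a := by
    linear_combination mul_le_mul_of_nonneg_left hquasar (by linarith : (0:ℝ) ≤ κ) - Δ * hγκ
  have hr : 1 / (2 * γ * α) * (r - r') = κ * a - κ * α / 2 * s := by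
    rw [hdist, hκ]; field_simp; ring
  set c := (2 * κ - 1) * L * α ^ 2 / 2 + κ * α / 2 with hc
  have hc0 : 0 ≤ c := by positivity
  have hcb : c - (2 * κ - 1) * α ≤ 0 := by
    nlinarith [mul_le_mul_of_nonneg_left hαL (mul_nonneg h2κ hα0.le),
      mul_le_mul_of_nonneg_left hκ1 hα0.le]
  have hmain : (2 / γ - 1) * Δ' - (2 / γ - 2) * Δ ≤ 1 / (2 * γ * α) * (r - r') + c * v := by
    rw [hr, show 2 / γ = 2 * κ by rw [hκ]; ring]
    nlinarith [mul_le_mul_of_nonneg_left hdescent h2κ, mul_le_mul_of_nonneg_left hvar hc0,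
      mul_nonpos_of_nonneg_of_nonpos hb hcb]
  have hcv : c * v ≤ v * α / (2 * γ * (1 - α * L * γ)) + (κ - 1) * L * α ^ 2 * v := by
    -- `(κα + Lα²)(1 - αLγ) = α - L²γ²α³` since `γκ = 1`
    have hcoef : κ * α / 2 + L * α ^ 2 / 2 ≤ α / (2 * γ * (1 - α * L * γ)) := by
      have hu : 0 < 1 - α * L * γ := by nlinarith
      rw [le_div_iff₀ (by positivity)]
      linear_combination (α * (1 - α * L * γ)) * hγκ + (by positivity : 0 ≤ (L * γ) ^ 2 * α ^ 3)
    rw [mul_div_assoc, hc]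
    nlinarith [mul_le_mul_of_nonneg_left hcoef hv]
  linarith

theorem memLp_comp_of_norm_sub_le {Ω E F : Type*} {mΩ : MeasurableSpace Ω} {μ : Measure Ω}
    [NormedAddCommGroup E] [NormedAddCommGroup F] [IsFiniteMeasure μ] {p : ENNReal} {φ : E → F}
    {L : ℝ} (hφ : ∀ y z, ‖φ y - φ z‖ ≤ L * ‖y - z‖) {X : Ω → E} {x₀ : E}
    (hX : MemLp (fun ω => X ω - x₀) p μ) : MemLp (fun ω => φ (X ω)) p μ := by
  have hXm : AEStronglyMeasurable X μ := by simpa using hX.1.add_const x₀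
  have hsub : MemLp (fun ω => φ (X ω) - φ x₀) p μ :=
    hX.of_le_mul (((continuous_of_norm_sub_le hφ).comp_aestronglyMeasurable hXm).sub
      aestronglyMeasurable_const) (.of_forall fun ω => hφ (X ω) x₀)
  simpa only [Pi.add_def, sub_add_cancel] using hsub.add (memLp_const (φ x₀))

section Expectation

variable {Ω E : Type*} [NormedAddCommGroup E] [InnerProductSpace ℝ E]
  {m mΩ : MeasurableSpace Ω} {μ : Measure Ω}

theorem integrable_inner_of_memLp_two {u v : Ω → E} (hu : MemLp u 2 μ) (hv : MemLp v 2 μ) :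
    Integrable (fun ω => ⟪u ω, v ω⟫) μ :=
  memLp_one_iff_integrable.1 ((innerSL ℝ : E →L[ℝ] E →L[ℝ] ℝ).memLp_of_bilin 1 hu hv)

theorem integral_inner_eq_of_condExp_eq_s3 [CompleteSpace E] [IsFiniteMeasure μ] (hm : m ≤ mΩ)
    {h G H : Ω → E} (hh : StronglyMeasurable[m] h) (hG : Integrable G μ)
    (hhG : Integrable (fun ω => ⟪h ω, G ω⟫) μ) (hGH : μ[G|m] =ᵐ[μ] H) :
    ∫ ω, ⟪h ω, G ω⟫ ∂μ = ∫ ω, ⟪h ω, H ω⟫ ∂μ := by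
  rw [← integral_condExp hm]
  refine integral_congr_ae <| (condExp_bilin_of_stronglyMeasurable_left
    (innerSL ℝ : E →L[ℝ] E →L[ℝ] ℝ) hh hhG hG).trans ?_
  filter_upwards [hGH] with ω hω
  rw [hω]
  rfl

theorem integral_le_of_condExp_le [IsProbabilityMeasure μ] (hm : m ≤ mΩ) {F : Ω → ℝ} {c : ℝ}
    (hF : ∀ᵐ ω ∂μ, (μ[F|m]) ω ≤ c) : ∫ ω, F ω ∂μ ≤ c := by
  rw [← integral_condExp hm]
  simpa using integral_mono_ae integrable_condExp (integrable_const c) hF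

theorem integral_norm_sub_sq_eq_of_condExp_eq [CompleteSpace E] [IsFiniteMeasure μ]
    (hm : m ≤ mΩ) {G H : Ω → E} (hH : StronglyMeasurable[m] H) (hG : Integrable G μ)
    (hGL2 : MemLp G 2 μ) (hHL2 : MemLp H 2 μ) (hGH : μ[G|m] =ᵐ[μ] H) :
    ∫ ω, ‖G ω - H ω‖ ^ 2 ∂μ = ∫ ω, ‖G ω‖ ^ 2 ∂μ - ∫ ω, ‖H ω‖ ^ 2 ∂μ := by
  have hG2 := (memLp_two_iff_integrable_sq_norm hGL2.1).1 hGL2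
  have hH2 := (memLp_two_iff_integrable_sq_norm hHL2.1).1 hHL2
  have hHG := integrable_inner_of_memLp_two hHL2 hGL2
  have hEHG : ∫ ω, ⟪H ω, G ω⟫ ∂μ = ∫ ω, ‖H ω‖ ^ 2 ∂μ := by
    simp_rw [integral_inner_eq_of_condExp_eq_s3 hm hH hG hHG hGH, real_inner_self_eq_norm_sq]
  have hpt : ∀ ω, ‖G ω - H ω‖ ^ 2 = ‖G ω‖ ^ 2 - 2 * ⟪H ω, G ω⟫ + ‖H ω‖ ^ 2 := fun ω => by
    rw [norm_sub_sq_real, real_inner_comm]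
  simp_rw [hpt]
  simp (disch := fun_prop) only [integral_add, integral_sub, integral_const_mul]
  rw [hEHG]
  ring

theorem integral_norm_sub_smul_sq {u G : Ω → E} (α : ℝ)
    (hu2 : Integrable (fun ω => ‖u ω‖ ^ 2) μ) (huG : Integrable (fun ω => ⟪u ω, G ω⟫) μ)
    (hG2 : Integrable (fun ω => ‖G ω‖ ^ 2) μ) :
    ∫ ω, ‖u ω - α • G ω‖ ^ 2 ∂μ
      = ∫ ω, ‖u ω‖ ^ 2 ∂μ - 2 * α * ∫ ω, ⟪u ω, G ω⟫ ∂μ + α ^ 2 * ∫ ω, ‖G ω‖ ^ 2 ∂μ := by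
  have hpt : ∀ ω, ‖u ω - α • G ω‖ ^ 2
      = ‖u ω‖ ^ 2 - 2 * α * ⟪u ω, G ω⟫ + α ^ 2 * ‖G ω‖ ^ 2 := fun ω => by
    rw [norm_sub_sq_real, real_inner_smul_right, norm_smul, mul_pow, Real.norm_eq_abs, sq_abs]
    ring
  simp_rw [hpt]
  simp (disch := fun_prop) only [integral_add, integral_sub, integral_const_mul]

theorem integral_comp_sub_smul_le_of_lipschitz_gradient [CompleteSpace E] {f : E → ℝ}
    {f' : E → E} {L : ℝ} (hgrad : ∀ y, HasGradientAt f (f' y) y)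
    (hsmooth : ∀ y z, ‖f' y - f' z‖ ≤ L * ‖y - z‖) {X G : Ω → E} (α : ℝ)
    (hfX : Integrable (fun ω => f (X ω)) μ) (hfX' : Integrable (fun ω => f (X ω - α • G ω)) μ)
    (hDG : Integrable (fun ω => ⟪f' (X ω), G ω⟫) μ) (hG2 : Integrable (fun ω => ‖G ω‖ ^ 2) μ) :
    ∫ ω, f (X ω - α • G ω) ∂μ
      ≤ ∫ ω, f (X ω) ∂μ - α * ∫ ω, ⟪f' (X ω), G ω⟫ ∂μ + L * α ^ 2 / 2 * ∫ ω, ‖G ω‖ ^ 2 ∂μ := by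
  have hpt : ∀ ω, f (X ω - α • G ω)
      ≤ f (X ω) - α * ⟪f' (X ω), G ω⟫ + L * α ^ 2 / 2 * ‖G ω‖ ^ 2 := fun ω => by
    have := le_add_inner_add_sq_of_lipschitz_gradient hgrad hsmooth (X ω) (X ω - α • G ω)
    rw [sub_sub_cancel_left, inner_neg_right, real_inner_smul_right, norm_neg, norm_smul,
      Real.norm_eq_abs, mul_pow, sq_abs] at this
    linarith
  have h1 : Integrable (fun ω => f (X ω) - α * ⟪f' (X ω), G ω⟫) μ := hfX.sub (hDG.const_mul α)
  have h2 : Integrable (fun ω => L * α ^ 2 / 2 * ‖G ω‖ ^ 2) μ := hG2.const_mul _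
  calc ∫ ω, f (X ω - α • G ω) ∂μ
      ≤ ∫ ω, (f (X ω) - α * ⟪f' (X ω), G ω⟫ + L * α ^ 2 / 2 * ‖G ω‖ ^ 2) ∂μ :=
        integral_mono hfX' (h1.add h2) hpt
    _ = _ := by
        rw [integral_add h1 h2, integral_sub hfX (hDG.const_mul α), integral_const_mul,
          integral_const_mul]

theorem sgd_one_step_of_condExp [CompleteSpace E] [IsProbabilityMeasure μ]
    {f : E → ℝ} {f' : E → E} {xstar : E} {L γ σ α : ℝ}
    (hgrad : ∀ y, HasGradientAt f (f' y) y)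
    (hγ0 : 0 < γ) (hγ1 : γ ≤ 1)
    (hqc : ∀ y, f xstar ≥ f y + (1 / γ) * ⟪f' y, xstar - y⟫)
    (hsmooth : ∀ y z, ‖f' y - f' z‖ ≤ L * ‖y - z‖)
    (hα0 : 0 < α) (hα : α ≤ 1 / (2 * L))
    (hm : m ≤ mΩ) {X G : Ω → E} (hX : StronglyMeasurable[m] X)
    (hG : Integrable G μ) (hG2 : Integrable (fun ω => ‖G ω‖ ^ 2) μ)
    (hunbiased : μ[G|m] =ᵐ[μ] fun ω => f' (X ω))
    (hvar : ∀ᵐ ω ∂μ, (μ[fun ω => ‖G ω - f' (X ω)‖ ^ 2|m]) ω ≤ σ ^ 2)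
    (hfX : Integrable (fun ω => f (X ω)) μ) (hfX' : Integrable (fun ω => f (X ω - α • G ω)) μ)
    (hX2 : Integrable (fun ω => ‖X ω - xstar‖ ^ 2) μ) :
    (2 / γ - 1) * (∫ ω, f (X ω - α • G ω) ∂μ - f xstar)
        - (2 / γ - 2) * (∫ ω, f (X ω) ∂μ - f xstar)
      ≤ (1 / (2 * γ * α)) * (∫ ω, ‖X ω - xstar‖ ^ 2 ∂μ - ∫ ω, ‖X ω - α • G ω - xstar‖ ^ 2 ∂μ)
        + σ ^ 2 * α / (2 * γ * (1 - α * L * γ)) + (1 / γ - 1) * L * α ^ 2 * σ ^ 2 := by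
  set D := fun ω => f' (X ω)
  have hXm : StronglyMeasurable[m] fun ω => X ω - xstar := hX.sub stronglyMeasurable_const
  have hXL2 : MemLp (fun ω => X ω - xstar) 2 μ :=
    (memLp_two_iff_integrable_sq_norm (hXm.mono hm).aestronglyMeasurable).2 hX2
  have hGL2 : MemLp G 2 μ := (memLp_two_iff_integrable_sq_norm hG.1).2 hG2
  have hDL2 : MemLp D 2 μ := memLp_comp_of_norm_sub_le hsmooth hXL2
  have hDG := integrable_inner_of_memLp_two hDL2 hGL2
  have hXG := integrable_inner_of_memLp_two hXL2 hGL2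
  have hXD := integrable_inner_of_memLp_two hXL2 hDL2
  have hDm : StronglyMeasurable[m] D :=
    (continuous_of_norm_sub_le hsmooth).comp_stronglyMeasurable hX
  have hEDG : ∫ ω, ⟪D ω, G ω⟫ ∂μ = ∫ ω, ‖D ω‖ ^ 2 ∂μ := by
    simp_rw [integral_inner_eq_of_condExp_eq_s3 hm hDm hG hDG hunbiased, real_inner_self_eq_norm_sq]
  have hEXG : ∫ ω, ⟪X ω - xstar, G ω⟫ ∂μ = ∫ ω, ⟪X ω - xstar, D ω⟫ ∂μ :=
    integral_inner_eq_of_condExp_eq_s3 hm hXm hG hXG hunbiased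
  refine sgd_one_step_of_moment_bounds (b := ∫ ω, ‖D ω‖ ^ 2 ∂μ) (s := ∫ ω, ‖G ω‖ ^ 2 ∂μ)
    (a := ∫ ω, ⟪X ω - xstar, D ω⟫ ∂μ) hγ0 hγ1 hα0 hα (sq_nonneg σ)
    (integral_nonneg fun _ => sq_nonneg _) ?descent ?dist ?quasar ?var
  case descent =>
    have h : ∫ ω, f (X ω - α • G ω) ∂μ ≤ ∫ ω, f (X ω) ∂μ - α * ∫ ω, ⟪D ω, G ω⟫ ∂μ
        + L * α ^ 2 / 2 * ∫ ω, ‖G ω‖ ^ 2 ∂μ :=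
      integral_comp_sub_smul_le_of_lipschitz_gradient hgrad hsmooth α hfX hfX' hDG hG2
    rw [hEDG] at h
    linarith
  case dist =>
    simp_rw [sub_right_comm _ (α • _) xstar]
    rw [integral_norm_sub_smul_sq α hX2 hXG hG2, hEXG]
  case quasar =>
    have hint : Integrable (fun ω => γ * (f (X ω) - f xstar)) μ :=
      (hfX.sub (integrable_const _)).const_mul γ
    have h := integral_mono hint hXD (mul_sub_le_inner_of_quasar hγ0 hqc <| X ·)
    rw [integral_const_mul, integral_sub hfX (integrable_const _)] at h
    simpa using h
  case var =>
    have hV : ∫ ω, ‖G ω - D ω‖ ^ 2 ∂μ ≤ σ ^ 2 := integral_le_of_condExp_le hm hvar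
    rw [integral_norm_sub_sq_eq_of_condExp_eq hm hDm hG hGL2 hDL2 hunbiased] at hV
    linarith

end Expectation

theorem stronglyMeasurable_iSup_comap_of_step {Ω E : Type*} [MeasurableSpace Ω]
    [NormedAddCommGroup E] [NormedSpace ℝ E] [MeasurableSpace E] [BorelSpace E]
    [SecondCountableTopology E] {x g : ℕ → Ω → E} {x₀ : E} {α : ℝ}
    (hx0 : x 0 = fun _ => x₀) (hstep : ∀ t, x (t + 1) = fun ω => x t ω - α • g t ω) (t : ℕ) :
    StronglyMeasurable[⨆ i ∈ range t, MeasurableSpace.comap (g i) inferInstance] (x t) := by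
  induction t with
  | zero => rw [hx0]; exact stronglyMeasurable_const
  | succ t ih =>
    have hmono : (⨆ i ∈ range t, MeasurableSpace.comap (g i) inferInstance)
        ≤ ⨆ i ∈ range (t + 1), MeasurableSpace.comap (g i) inferInstance :=
      biSup_mono fun i hi => range_subset_range.2 t.le_succ hi
    have hg : MeasurableSpace.comap (g t) inferInstance
        ≤ ⨆ i ∈ range (t + 1), MeasurableSpace.comap (g i) inferInstance :=
      le_iSup₂ (f := fun i _ => MeasurableSpace.comap (g i) inferInstance) t (self_mem_range_succ t)
    rw [hstep]
    exact (ih.mono hmono).sub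
      (((comap_measurable (g t)).mono hg le_rfl).stronglyMeasurable.const_smul α)

theorem sgd_quasar_one_step_general
    {Ω : Type*} [MeasurableSpace Ω] (P : Measure Ω) [IsProbabilityMeasure P]
    {n : ℕ} (f : EuclideanSpace ℝ (Fin n) → ℝ)
    (f' : EuclideanSpace ℝ (Fin n) → EuclideanSpace ℝ (Fin n))
    (xstar x₀ : EuclideanSpace ℝ (Fin n))
    (L γ σ α : ℝ)
    (x g : ℕ → Ω → EuclideanSpace ℝ (Fin n))
    (hgrad : ∀ y, HasGradientAt f (f' y) y)
    (hγ0 : 0 < γ) (hγ1 : γ ≤ 1)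
    (hqc : ∀ y, f xstar ≥ f y + (1/γ) * ⟪f' y, xstar - y⟫)
    (hsmooth : ∀ y z, ‖f' y - f' z‖ ≤ L * ‖y - z‖)
    (hα0 : 0 < α) (hα : α ≤ 1/(2*L))
    (hx0 : x 0 = fun _ => x₀)
    (hstep : ∀ t, x (t+1) = fun ω => x t ω - α • g t ω)
    (hgmeas : ∀ t, Measurable (g t))
    (hgint : ∀ t, Integrable (g t) P)
    (hgsqint : ∀ t, Integrable (fun ω => ‖g t ω‖^2) P)
    (hunbiased : ∀ t,
      MeasureTheory.condExp
          (⨆ i ∈ Finset.range t, MeasurableSpace.comap (g i) inferInstance) P (g t)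
        =ᵐ[P] fun ω => f' (x t ω))
    (hvar : ∀ t, ∀ᵐ ω ∂P,
      MeasureTheory.condExp
          (⨆ i ∈ Finset.range t, MeasurableSpace.comap (g i) inferInstance) P
          (fun ω' => ‖g t ω' - f' (x t ω')‖^2) ω ≤ σ^2)
    (hfint : ∀ t, Integrable (fun ω => f (x t ω)) P)
    (hsqint : ∀ t, Integrable (fun ω => ‖x t ω - xstar‖^2) P)
:    ∀ t : ℕ,
      (2/γ - 1) * (∫ ω, f (x (t+1) ω) ∂P - f xstar)
        - (2/γ - 2) * (∫ ω, f (x t ω) ∂P - f xstar)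
      ≤ (1/(2*γ*α)) * (∫ ω, ‖x t ω - xstar‖^2 ∂P - ∫ ω, ‖x (t+1) ω - xstar‖^2 ∂P)
        + σ^2*α/(2*γ*(1-α*L*γ)) + (1/γ - 1)*L*α^2*σ^2 := by
  intro t
  have hle : (⨆ i ∈ range t, MeasurableSpace.comap (g i) inferInstance) ≤ ‹MeasurableSpace Ω› :=
    iSup₂_le fun i _ => (hgmeas i).comap_le
  have hfint' := hfint (t + 1)
  simp only [hstep t] at hfint' ⊢
  exact sgd_one_step_of_condExp hgrad hγ0 hγ1 hqc hsmooth hα0 hα hle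
    (stronglyMeasurable_iSup_comap_of_step hx0 hstep t) (hgint t) (hgsqint t) (hunbiased t)
    (hvar t) (hfint t) hfint' (hsqint t)

theorem sgd_quasar_one_step
    {Ω : Type*} [MeasurableSpace Ω] (P : Measure Ω) [IsProbabilityMeasure P]
    {n : ℕ} (f : EuclideanSpace ℝ (Fin n) → ℝ)
    (f' : EuclideanSpace ℝ (Fin n) → EuclideanSpace ℝ (Fin n))
    (xstar x₀ : EuclideanSpace ℝ (Fin n))
    (L γ σ R α : ℝ)
    (x g : ℕ → Ω → EuclideanSpace ℝ (Fin n))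
    (hgrad : ∀ y, HasGradientAt f (f' y) y)
    (hmin : ∀ y, f xstar ≤ f y)
    (hγ0 : 0 < γ) (hγ1 : γ ≤ 1)
    (hqc : ∀ y, f xstar ≥ f y + (1/γ) * ⟪f' y, xstar - y⟫)
    (hsmooth : ∀ y z, ‖f' y - f' z‖ ≤ L * ‖y - z‖)
    (hR : ‖x₀ - xstar‖ ≤ R)
    (hα0 : 0 < α) (hα : α ≤ 1/(2*L))
    (hx0 : x 0 = fun _ => x₀)
    (hstep : ∀ t, x (t+1) = fun ω => x t ω - α • g t ω)
    (hgmeas : ∀ t, Measurable (g t))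
    (hgint : ∀ t, Integrable (g t) P)
    (hgsqint : ∀ t, Integrable (fun ω => ‖g t ω‖^2) P)
    (hunbiased : ∀ t,
      MeasureTheory.condExp
          (⨆ i ∈ Finset.range t, MeasurableSpace.comap (g i) inferInstance) P (g t)
        =ᵐ[P] fun ω => f' (x t ω))
    (hvar : ∀ t, ∀ᵐ ω ∂P,
      MeasureTheory.condExp
          (⨆ i ∈ Finset.range t, MeasurableSpace.comap (g i) inferInstance) P
          (fun ω' => ‖g t ω' - f' (x t ω')‖^2) ω ≤ σ^2)
    (hfint : ∀ t, Integrable (fun ω => f (x t ω)) P)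
    (hsqint : ∀ t, Integrable (fun ω => ‖x t ω - xstar‖^2) P)
:    ∀ t : ℕ,
      (2/γ - 1) * (∫ ω, f (x (t+1) ω) ∂P - f xstar)
        - (2/γ - 2) * (∫ ω, f (x t ω) ∂P - f xstar)
      ≤ (1/(2*γ*α)) * (∫ ω, ‖x t ω - xstar‖^2 ∂P - ∫ ω, ‖x (t+1) ω - xstar‖^2 ∂P)
        + σ^2*α/(2*γ*(1-α*L*γ)) + (1/γ - 1)*L*α^2*σ^2 :=
  sgd_quasar_one_step_general P f f' xstar x₀ L γ σ α x g hgrad hγ0 hγ1 hqc hsmooth hα0 hα hx0 hstep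
    hgmeas hgint hgsqint hunbiased hvar hfint hsqint
end
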